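/- Let N > 100 and let (x_1, …, x_N) be the unique strictly decreasing zero-mean solution of the MIW recursion. Then for every n with 1 ≤ n ≤ m − 1, √(n(n+1)/2) ≤ S_n ≤ (3n/2)·√(2(1 + log(m/n))). -/

import Mathlib

/-!
Put `S₀ = 0`. The partial sums solve the boundary value problem
`S_{k+2} - 2 S_{k+1} + S_k = -1 / S_{k+1}`, `S₀ = S_N = 0`, and are positive in between, because a
decreasing sequence with zero sum has positive prefix sums. As `s ↦ 1 / s` is decreasing, the
difference of two positive solutions is convex, hence vanishes once it vanishes at both ends; so
`S_k = S_{N-k}`, which yields `x_m ≥ 0` and `S_m x_m ≤ 1/2`.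

Abel summation gives `S_k = k x_{k+1} + ∑_{j ≤ k} j / S_j ≥ k (k+1) / (2 S_k)`, the lower
bound. For the upper bound, `∑_{i ≤ k} x_i² = k - 1 + S_k x_k` and Cauchy–Schwarz give
`S_n² ≤ n (n-1) + n S_n x_n`, while `x_k² - x_{k+1}² ≤ 2 / k` telescopes down from
`x_m² ≤ 1 / (2m)` to `x_n² ≤ 2 / n + 2 log (m / n)`. Together,
`S_n² ≤ 2 n² (1 + log (m / n))`.
-/

noncomputable section

/-- Partial sums `S_n = x_1 + ⋯ + x_n`. -/
def Ssum (x : ℕ → ℝ) (n : ℕ) : ℝ := ∑ i ∈ Finset.Icc 1 n, x i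

/-- `x` is a solution of the MIW recursion
`x_{n+1} = x_n - 1/(x_1 + ⋯ + x_n)` for `1 ≤ n ≤ N - 1`. -/
def IsMIW (N : ℕ) (x : ℕ → ℝ) : Prop :=
  ∀ n, 1 ≤ n → n ≤ N - 1 → Ssum x n ≠ 0 ∧ x (n + 1) = x n - 1 / Ssum x n

/-- `m = (N+1)/2` if `N` is odd and `m = N/2` if `N` is even; in natural number
division both equal `(N+1)/2`. -/
def mIdx (N : ℕ) : ℕ := (N + 1) / 2

open Finset Real

section Ssum

variable {x : ℕ → ℝ}

lemma Ssum_zero (x : ℕ → ℝ) : Ssum x 0 = 0 := by simp [Ssum]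

lemma Ssum_succ (x : ℕ → ℝ) (n : ℕ) : Ssum x (n + 1) = Ssum x n + x (n + 1) :=
  sum_Icc_succ_top (by omega) x

lemma Ssum_add_sum_Ioc {n N : ℕ} (hn : n ≤ N) :
    Ssum x n + ∑ i ∈ Ioc n N, x i = Ssum x N := by
  have h := sum_Ioc_consecutive x (Nat.zero_le n) hn
  rwa [← Icc_add_one_left_eq_Ioc 0 n, ← Icc_add_one_left_eq_Ioc 0 N] at h

lemma Ssum_le_Ssum {j k : ℕ} (hjk : j ≤ k) (hx : ∀ i, j < i → i ≤ k → 0 ≤ x i) :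
    Ssum x j ≤ Ssum x k :=
  sum_le_sum_of_subset_of_nonneg (Icc_subset_Icc_right hjk) fun i hik hij => by
    simp only [mem_Icc, not_and, not_le] at hik hij
    exact hx i (hij hik.1) hik.2

lemma mul_le_Ssum_of_antitoneOn {N n : ℕ} (hx : AntitoneOn x (Set.Icc 1 N)) (hn : n ≤ N) :
    n * x n ≤ Ssum x n := by
  rcases Nat.eq_zero_or_pos n with rfl | hn1
  · simp [Ssum_zero]
  have h := card_nsmul_le_sum (Icc 1 n) x (x n) fun i hi => by
    simp only [mem_Icc] at hi
    exact hx ⟨hi.1, hi.2.trans hn⟩ ⟨hn1, hn⟩ hi.2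
  rwa [Nat.card_Icc, Nat.add_sub_cancel, nsmul_eq_mul] at h

lemma sum_Icc_one_natCast (k : ℕ) : ∑ j ∈ Icc 1 k, (j : ℝ) = k * (k + 1) / 2 := by
  induction k with
  | zero => simp
  | succ k ih => rw [sum_Icc_succ_top (by omega), ih]; push_cast; ring

lemma Ssum_pos {N : ℕ} (hx : StrictAntiOn x (Set.Icc 1 N))
    (hmean : Ssum x N = 0) {n : ℕ} (hn1 : 1 ≤ n) (hnN : n < N) : 0 < Ssum x n := by
  have hstep : x (n + 1) < x n := hx ⟨hn1, hnN.le⟩ ⟨by omega, hnN⟩ (by omega)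
  have hhead : n * x n ≤ Ssum x n := mul_le_Ssum_of_antitoneOn hx.antitoneOn hnN.le
  have htail : ∑ i ∈ Ioc n N, x i ≤ (N - n : ℕ) * x (n + 1) := by
    have h := sum_le_card_nsmul (Ioc n N) x (x (n + 1)) fun i hi => by
      simp only [mem_Ioc] at hi
      exact hx.antitoneOn ⟨by omega, by omega⟩ ⟨by omega, hi.2⟩ (by omega)
    rwa [Nat.card_Ioc, nsmul_eq_mul] at h
  have hsplit := Ssum_add_sum_Ioc (x := x) hnN.le
  have hn : (0 : ℝ) < n := by exact_mod_cast hn1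
  have hNn : (0 : ℝ) < (N - n : ℕ) := by exact_mod_cast Nat.sub_pos_of_lt hnN
  have hN : ((N - n : ℕ) : ℝ) + n = N := by rw [Nat.cast_sub hnN.le]; ring
  -- `n (-S_n) = n · tail ≤ n (N - n) x_{n+1} < (N - n) · n x_n ≤ (N - n) S_n`
  nlinarith [mul_lt_mul_of_pos_left hstep (mul_pos hn hNn)]

end Ssum

section SecondOrder

variable {g : ℝ → ℝ} {s : Set ℝ} {N : ℕ} {u v : ℕ → ℝ}

lemma monotoneOn_sub_of_secondOrder (hg : AntitoneOn g s)
    (hu : ∀ k, k + 2 ≤ N → u (k + 2) - u (k + 1) = u (k + 1) - u k - g (u (k + 1)))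
    (hv : ∀ k, k + 2 ≤ N → v (k + 2) - v (k + 1) = v (k + 1) - v k - g (v (k + 1)))
    (hus : ∀ k, 1 ≤ k → k < N → u k ∈ s) (hvs : ∀ k, 1 ≤ k → k < N → v k ∈ s)
    (h0 : u 0 = v 0) (h1 : u 1 ≤ v 1) :
    MonotoneOn (v - u) (Set.Iic N) := by
  have key : ∀ k, k + 1 ≤ N → 0 ≤ v k - u k ∧ v k - u k ≤ v (k + 1) - u (k + 1) := by
    intro k
    induction k with
    | zero => intro _; constructor <;> linarith
    | succ k ih =>
      intro hk
      obtain ⟨hd0, hd1⟩ := ih (by omega)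
      have hgk : g (v (k + 1)) ≤ g (u (k + 1)) :=
        hg (hus _ (by omega) (by omega)) (hvs _ (by omega) (by omega)) (by linarith)
      have := hu k hk
      have := hv k hk
      constructor <;> linarith
  exact monotoneOn_of_le_add_one Set.ordConnected_Iic fun k _ _ hk => (key k hk).2

theorem eq_of_secondOrder_boundary (hg : AntitoneOn g s)
    (hu : ∀ k, k + 2 ≤ N → u (k + 2) - u (k + 1) = u (k + 1) - u k - g (u (k + 1)))
    (hv : ∀ k, k + 2 ≤ N → v (k + 2) - v (k + 1) = v (k + 1) - v k - g (v (k + 1)))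
    (hus : ∀ k, 1 ≤ k → k < N → u k ∈ s) (hvs : ∀ k, 1 ≤ k → k < N → v k ∈ s)
    (h0 : u 0 = v 0) (hN : u N = v N) {k : ℕ} (hk : k ≤ N) : u k = v k := by
  wlog h1 : u 1 ≤ v 1 generalizing u v
  · exact (this hv hu hvs hus h0.symm hN.symm (le_of_not_ge h1)).symm
  have hmono := monotoneOn_sub_of_secondOrder hg hu hv hus hvs h0 h1
  have hlo := hmono (Set.mem_Iic.2 (Nat.zero_le N)) (Set.mem_Iic.2 hk) (Nat.zero_le k)
  have hhi := hmono (Set.mem_Iic.2 hk) (Set.mem_Iic.2 le_rfl) hk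
  simp only [Pi.sub_apply] at hlo hhi
  linarith

end SecondOrder

namespace IsMIW

variable {N : ℕ} {x : ℕ → ℝ}

lemma Ssum_secondOrder (h : IsMIW N x) {k : ℕ} (hk : k + 2 ≤ N) :
    Ssum x (k + 2) - Ssum x (k + 1) = Ssum x (k + 1) - Ssum x k - 1 / Ssum x (k + 1) := by
  have hx := (h (k + 1) (by omega) (by omega)).2
  rw [Ssum_succ x (k + 1), hx]
  linarith [Ssum_succ x k]

lemma Ssum_eq_Ssum_sub (h : IsMIW N x) (hpos : ∀ k, 1 ≤ k → k < N → 0 < Ssum x k)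
    (hmean : Ssum x N = 0) {n : ℕ} (hn : n ≤ N) : Ssum x n = Ssum x (N - n) := by
  refine eq_of_secondOrder_boundary (g := fun s => 1 / s) (s := Set.Ioi 0) (N := N)
    (fun a ha _ _ hab => one_div_le_one_div_of_le ha hab) (fun k hk => h.Ssum_secondOrder hk)
    (fun k hk => ?_) hpos (fun k hk1 hkN => hpos (N - k) (by omega) (by omega))
    (by simp [Ssum_zero, hmean]) (by simp [Ssum_zero, hmean]) hn
  obtain ⟨j, rfl⟩ : ∃ j, N = j + k + 2 := ⟨N - k - 2, by omega⟩
  have := h.Ssum_secondOrder (k := j) (by omega)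
  rw [show j + k + 2 - (k + 2) = j by omega, show j + k + 2 - (k + 1) = j + 1 by omega,
    show j + k + 2 - k = j + 2 by omega]
  linarith

lemma x_mIdx_nonneg_and_sq_le (h : IsMIW N x) (hx : StrictAntiOn x (Set.Icc 1 N))
    (hmean : Ssum x N = 0) (hN : 0 < N) :
    0 ≤ x (mIdx N) ∧ x (mIdx N) ^ 2 ≤ 2 / mIdx N := by
  set m := mIdx N
  have hmN : m = (N + 1) / 2 := rfl
  have hpos : ∀ k, 1 ≤ k → k < N → 0 < Ssum x k := fun k => Ssum_pos hx hmean
  have hxm : x m = Ssum x m - Ssum x (m - 1) := by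
    have := Ssum_succ x (m - 1)
    rw [Nat.sub_add_cancel (by omega)] at this
    linarith
  have hmid : 0 ≤ x m ∧ Ssum x m * x m ≤ 1 / 2 := by
    rcases Nat.even_or_odd' N with ⟨j, rfl | rfl⟩
    · have hmj : m = j := by omega
      have hsymm := h.Ssum_eq_Ssum_sub hpos hmean (n := m - 1) (by omega)
      rw [show 2 * j - (m - 1) = m + 1 by omega, Ssum_succ] at hsymm
      have hsucc := (h m (by omega) (by omega)).2
      have hSm := hpos m (by omega) (by omega)
      have hxm_eq : x m = 1 / Ssum x m / 2 := by linarith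
      refine ⟨by rw [hxm_eq]; positivity, le_of_eq ?_⟩
      rw [hxm_eq]
      field_simp
    · have hsymm := h.Ssum_eq_Ssum_sub hpos hmean (n := m) (by omega)
      rw [show 2 * j + 1 - m = m - 1 by omega] at hsymm
      simp [hxm, hsymm]
  have hm0 : (0 : ℝ) < m := Nat.cast_pos.2 (by omega)
  have hmx := mul_le_Ssum_of_antitoneOn hx.antitoneOn (n := m) (by omega)
  refine ⟨hmid.1, ?_⟩
  rw [le_div_iff₀ hm0]
  nlinarith [hmid.1, hmid.2]

lemma Ssum_eq_mul_add_sum (h : IsMIW N x) {k : ℕ} (hk : k + 1 ≤ N) :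
    Ssum x k = k * x (k + 1) + ∑ j ∈ Icc 1 k, (j : ℝ) / Ssum x j := by
  induction k with
  | zero => simp [Ssum_zero]
  | succ k ih =>
    rw [Ssum_succ, ih (by omega), sum_Icc_succ_top (by omega),
      (h (k + 1) (by omega) (by omega)).2]
    push_cast
    ring

lemma sqrt_le_Ssum (h : IsMIW N x) {k : ℕ} (hk1 : 1 ≤ k) (hk : k + 1 ≤ N)
    (hx : 0 ≤ x (k + 1))
    (hS : ∀ j, 1 ≤ j → j ≤ k → 0 < Ssum x j ∧ Ssum x j ≤ Ssum x k) :
    √(k * (k + 1) / 2) ≤ Ssum x k := by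
  have hSk := (hS k hk1 le_rfl).1
  have hsum : (k * (k + 1) / 2) / Ssum x k ≤ ∑ j ∈ Icc 1 k, (j : ℝ) / Ssum x j := by
    rw [← sum_Icc_one_natCast, sum_div]
    refine sum_le_sum fun j hj => ?_
    simp only [mem_Icc] at hj
    have := hS j hj.1 hj.2
    exact div_le_div_of_nonneg_left (Nat.cast_nonneg j) this.1 this.2
  have habel := h.Ssum_eq_mul_add_sum hk
  have hkx : 0 ≤ (k : ℝ) * x (k + 1) := mul_nonneg (Nat.cast_nonneg k) hx
  have hle : (k * (k + 1) / 2) / Ssum x k ≤ Ssum x k := by linarith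
  rw [div_le_iff₀ hSk] at hle
  rw [sqrt_le_left hSk.le]
  linarith

lemma sum_sq_eq (h : IsMIW N x) {k : ℕ} (hk1 : 1 ≤ k) (hk : k ≤ N) :
    ∑ i ∈ Icc 1 k, x i ^ 2 = k - 1 + Ssum x k * x k := by
  induction k, hk1 using Nat.le_induction with
  | base => simp [Ssum, sq]
  | succ k hk1 ih =>
    obtain ⟨hne, hx⟩ := h k hk1 (by omega)
    have hmul : Ssum x k * x (k + 1) = Ssum x k * x k - 1 := by rw [hx]; field_simp
    rw [sum_Icc_succ_top (by omega), ih (by omega), Ssum_succ]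
    push_cast
    linear_combination -hmul

lemma sq_Ssum_le (h : IsMIW N x) {k : ℕ} (hk1 : 1 ≤ k) (hk : k ≤ N) :
    Ssum x k ^ 2 ≤ k * (k - 1) + k * Ssum x k * x k := by
  have hcs := sq_sum_le_card_mul_sum_sq (s := Icc 1 k) (f := x)
  rw [Nat.card_Icc, Nat.add_sub_cancel, h.sum_sq_eq hk1 hk] at hcs
  exact hcs.trans_eq (by unfold Ssum; ring)

lemma sq_le_sq_succ_add (h : IsMIW N x) {k : ℕ} (hk1 : 1 ≤ k) (hk : k + 1 ≤ N)
    (hS : 0 < Ssum x k) (hkx : k * x k ≤ Ssum x k) :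
    x k ^ 2 ≤ x (k + 1) ^ 2 + 2 / k := by
  have hx := (h k hk1 (by omega)).2
  have hk0 : (0 : ℝ) < k := by exact_mod_cast hk1
  have hxS : x k / Ssum x k ≤ 1 / k := by rw [div_le_div_iff₀ hS hk0]; linarith
  calc x k ^ 2 = x (k + 1) ^ 2 + 2 * (x k / Ssum x k) - (1 / Ssum x k) ^ 2 := by
        rw [hx]; ring
    _ ≤ x (k + 1) ^ 2 + 2 * (1 / k) := by nlinarith [sq_nonneg (1 / Ssum x k)]
    _ = x (k + 1) ^ 2 + 2 / k := by ring

end IsMIW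

lemma one_div_add_one_le_log_sub_log {k : ℝ} (hk : 0 < k) :
    1 / (k + 1) ≤ log (k + 1) - log k := by
  have h := one_sub_inv_le_log_of_pos (x := (k + 1) / k) (by positivity)
  rw [log_div (by positivity) hk.ne', inv_div] at h
  calc 1 / (k + 1) = 1 - k / (k + 1) := by field_simp; ring
    _ ≤ _ := h

lemma le_two_div_add_log_of_le_succ_add {a : ℕ → ℝ} {m : ℕ} (hm : a m ≤ 2 / m)
    (hstep : ∀ k, 1 ≤ k → k < m → a k ≤ a (k + 1) + 2 / k) {n : ℕ} (hn1 : 1 ≤ n)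
    (hnm : n ≤ m) : a n ≤ 2 / n + 2 * log (m / n) := by
  induction hnm using Nat.decreasingInduction with
  | self => simp [hm]
  | of_succ k hkm ih =>
    have hk : (0 : ℝ) < k := by exact_mod_cast hn1
    have hlog := one_div_add_one_le_log_sub_log hk
    have hm0 : (0 : ℝ) < m := Nat.cast_pos.2 (by omega)
    have hsucc := ih (by omega)
    rw [Nat.cast_succ, log_div hm0.ne' (by positivity)] at hsucc
    rw [log_div hm0.ne' hk.ne']
    linarith [hstep k hn1 hkm, show 2 / ((k : ℝ) + 1) = 2 * (1 / (k + 1)) by ring]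

lemma le_mul_sqrt_of_sq_le_of_sq_le {n S y L : ℝ} (hn : 0 < n)
    (hS : S ^ 2 ≤ n * (n - 1) + n * S * y) (hy : y ^ 2 ≤ 2 / n + 2 * L) :
    S ≤ n * √(2 * (1 + L)) := by
  have hny : n ^ 2 * y ^ 2 ≤ n ^ 2 * (2 / n + 2 * L) := by gcongr
  have hsq : S ^ 2 ≤ n ^ 2 * (2 * (1 + L)) := by
    have : n ^ 2 * (2 / n + 2 * L) = 2 * n + 2 * n ^ 2 * L := by field_simp
    nlinarith [sq_nonneg (S - n * y)]
  calc S ≤ √(n ^ 2 * (2 * (1 + L))) := (le_abs_self S).trans (abs_le_sqrt hsq)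
    _ = n * √(2 * (1 + L)) := by rw [sqrt_mul (sq_nonneg n), sqrt_sq hn.le]

theorem Sn_bounds_general (N : ℕ) (x : ℕ → ℝ)
    (hMIW : IsMIW N x) (hdec : ∀ n, 1 ≤ n → n < N → x (n + 1) < x n)
    (hmean : ∑ i ∈ Finset.Icc 1 N, x i = 0) :
    ∀ n, 1 ≤ n → n ≤ mIdx N - 1 →
      Real.sqrt ((n : ℝ) * ((n : ℝ) + 1) / 2) ≤ Ssum x n ∧
      Ssum x n ≤ 3 * (n : ℝ) / 2 * Real.sqrt (2 * (1 + Real.log ((mIdx N : ℝ) / (n : ℝ)))) := by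
  intro n hn1 hnm
  set m := mIdx N
  have hmN : m = (N + 1) / 2 := rfl
  have hanti : StrictAntiOn x (Set.Icc 1 N) :=
    strictAntiOn_of_add_one_lt Set.ordConnected_Icc fun k _ hk hk1 => hdec k hk.1 hk1.2
  have hpos : ∀ k, 1 ≤ k → k < N → 0 < Ssum x k := fun k => Ssum_pos hanti hmean
  obtain ⟨hxm_nonneg, hxm_sq⟩ := hMIW.x_mIdx_nonneg_and_sq_le hanti hmean (by omega)
  have hx_nonneg : ∀ k, 1 ≤ k → k ≤ m → 0 ≤ x k := fun k hk1 hkm =>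
    hxm_nonneg.trans (hanti.antitoneOn ⟨hk1, by omega⟩ ⟨by omega, by omega⟩ hkm)
  have hkx : ∀ k, k ≤ N → k * x k ≤ Ssum x k := fun k =>
    mul_le_Ssum_of_antitoneOn hanti.antitoneOn
  have hxn_sq := le_two_div_add_log_of_le_succ_add (a := fun k => x k ^ 2) hxm_sq
    (fun k hk1 hkm => hMIW.sq_le_sq_succ_add hk1 (by omega) (hpos k hk1 (by omega))
      (hkx k (by omega))) hn1 (by omega)
  refine ⟨hMIW.sqrt_le_Ssum hn1 (by omega) (hx_nonneg (n + 1) (by omega) (by omega))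
    fun j hj1 hjn => ⟨hpos j hj1 (by omega),
      Ssum_le_Ssum hjn fun i hji hin => hx_nonneg i (by omega) (by omega)⟩, ?_⟩
  have hn0 : (0 : ℝ) < n := Nat.cast_pos.2 hn1
  have hupper := le_mul_sqrt_of_sq_le_of_sq_le hn0 (hMIW.sq_Ssum_le hn1 (by omega)) hxn_sq
  nlinarith [sqrt_nonneg (2 * (1 + log ((m : ℝ) / n)))]

/-- For the unique strictly decreasing zero-mean solution of the MIW recursion with
`N > 100`, for `1 ≤ n ≤ m - 1` one has
`√(n(n+1)/2) ≤ S_n ≤ (3n/2)√(2(1 + log(m/n)))`. -/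
theorem Sn_bounds (N : ℕ) (hN : 100 < N) (x : ℕ → ℝ)
    (hMIW : IsMIW N x) (hdec : ∀ n, 1 ≤ n → n < N → x (n + 1) < x n)
    (hmean : ∑ i ∈ Finset.Icc 1 N, x i = 0) :
    ∀ n, 1 ≤ n → n ≤ mIdx N - 1 →
      Real.sqrt ((n : ℝ) * ((n : ℝ) + 1) / 2) ≤ Ssum x n ∧
      Ssum x n ≤ 3 * (n : ℝ) / 2 * Real.sqrt (2 * (1 + Real.log ((mIdx N : ℝ) / (n : ℝ)))) :=
  Sn_bounds_general N x hMIW hdec hmean
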